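/- Let K₁,…,K_m be nonnegative n×n matrices, α₁,…,α_m positive reals with ∑α_t = 1, and p ∈ ℕ, p ≥ 1. Then r(K₁^(α₁) ∘ ⋯ ∘ K_m^(α_m)) ≤ r((K₁^p)^(α₁) ∘ ⋯ ∘ (K_m^p)^(α_m))^{1/p} ≤ r(K₁)^{α₁} ⋯ r(K_m)^{α_m}, where A^(α) denotes the entrywise power and K^p the ordinary matrix power. -/

import Mathlib

open scoped ENNReal
open Finset
noncomputable def specRad {n : ℕ} (A : Matrix (Fin n) (Fin n) ℝ) : ℝ≥0∞ :=
  spectralRadius ℂ (A.map (algebraMap ℝ ℂ))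
noncomputable def opNorm {n : ℕ} (A : Matrix (Fin n) (Fin n) ℝ) : ℝ :=
  ‖Matrix.toEuclideanCLM (𝕜 := ℝ) A‖

/-!
Gelfand's formula `r(A) = lim ‖A ^ k‖ ^ (1 / k)` holds for every algebra norm; we use the maximal
row-sum norm, which is monotone in the entries of nonnegative matrices. Hölder's inequality,
applied entrywise and inductively in `k`, gives
`(K₁^(α₁) ∘ ⋯ ∘ K_m^(α_m)) ^ k ≤ (K₁ ^ k)^(α₁) ∘ ⋯ ∘ (K_m ^ k)^(α_m)`, and applied to row sums
gives `‖K₁^(α₁) ∘ ⋯ ∘ K_m^(α_m)‖ ≤ ∏ ‖K_t‖ ^ α_t`. Taking `k`-th roots and letting `k → ∞` yields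
`r(K₁^(α₁) ∘ ⋯ ∘ K_m^(α_m)) ≤ ∏ r(K_t) ^ α_t`. The first inequality of the theorem follows from
`r(G) ^ p = r(G ^ p)` for `G = K₁^(α₁) ∘ ⋯ ∘ K_m^(α_m)`, the entrywise bound with `k = p`, and
monotonicity of `r` on nonnegative matrices; the second from the previous bound applied to the
`K_t ^ p` and `r(K_t ^ p) = r(K_t) ^ p`.
-/

open Filter
open scoped Topology NNReal

theorem Finset.sum_prod_rpow_le_prod_sum_rpow {τ κ : Type*} [Fintype τ] (s : Finset κ)
    (f : τ → κ → ℝ) (hf : ∀ t k, 0 ≤ f t k) {α : τ → ℝ} (hα : ∀ t, 0 < α t)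
    (hsum : ∑ t, α t = 1) :
    ∑ k ∈ s, ∏ t, f t k ^ α t ≤ ∏ t, (∑ k ∈ s, f t k) ^ α t := by
  set S : τ → ℝ := fun t => ∑ k ∈ s, f t k
  have hS : ∀ t, 0 ≤ S t := fun t => sum_nonneg fun k _ => hf t k
  by_cases hzero : ∃ t, S t = 0
  · obtain ⟨t₀, ht₀⟩ := hzero
    have hf₀ : ∀ k ∈ s, f t₀ k = 0 := (sum_eq_zero_iff_of_nonneg fun k _ => hf t₀ k).1 ht₀
    have hlhs : ∑ k ∈ s, ∏ t, f t k ^ α t = 0 := sum_eq_zero fun k hk =>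
      prod_eq_zero (mem_univ t₀) (by rw [hf₀ k hk, Real.zero_rpow (hα t₀).ne'])
    rw [hlhs]
    exact prod_nonneg fun t _ => Real.rpow_nonneg (hS t) _
  push Not at hzero
  have hSpos : ∀ t, 0 < S t := fun t => (hS t).lt_of_ne' (hzero t)
  have hP : 0 < ∏ t, S t ^ α t := prod_pos fun t _ => Real.rpow_pos_of_pos (hSpos t) _
  have amgm : ∀ k, (∏ t, f t k ^ α t) / ∏ t, S t ^ α t ≤ ∑ t, α t * (f t k / S t) := by
    intro k
    rw [← prod_div_distrib]
    simp_rw [← Real.div_rpow (hf _ k) (hS _)]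
    exact Real.geom_mean_le_arith_mean_weighted _ _ _ (fun t _ => (hα t).le) hsum
      fun t _ => div_nonneg (hf t k) (hS t)
  rw [← div_le_one hP, sum_div]
  calc ∑ k ∈ s, (∏ t, f t k ^ α t) / ∏ t, S t ^ α t
      ≤ ∑ k ∈ s, ∑ t, α t * (f t k / S t) := sum_le_sum fun k _ => amgm k
    _ = ∑ t, α t * (S t / S t) := by
        rw [sum_comm]
        simp_rw [← mul_sum, ← sum_div]
        rfl
    _ = 1 := by simp [div_self (hSpos _).ne', hsum]

section BanachAlgebra

variable {A : Type*} [NormedRing A] [NormedAlgebra ℂ A] [CompleteSpace A]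

theorem spectralRadius_ne_top (a : A) : spectralRadius ℂ a ≠ ∞ := by
  refine ne_top_of_le_ne_top ?_ (spectrum.spectralRadius_le_pow_nnnorm_pow_one_div ℂ a 0)
  exact ENNReal.mul_ne_top (by simp) (by simp)

theorem spectralRadius_pow (a : A) {p : ℕ} (hp : p ≠ 0) :
    spectralRadius ℂ (a ^ p) = spectralRadius ℂ a ^ p := by
  have hsub : Tendsto (p * ·) atTop atTop :=
    tendsto_id.atTop_mul_const' (by positivity) |>.congr fun k => mul_comm k p
  have hlim := ENNReal.Tendsto.pow (n := p)
    ((spectrum.pow_nnnorm_pow_one_div_tendsto_nhds_spectralRadius a).comp hsub)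
  refine tendsto_nhds_unique
    (spectrum.pow_nnnorm_pow_one_div_tendsto_nhds_spectralRadius (a ^ p)) (hlim.congr fun k => ?_)
  rw [Function.comp_apply, ← pow_mul, ← ENNReal.rpow_natCast, ← ENNReal.rpow_mul]
  congr 1
  push_cast
  field_simp

end BanachAlgebra

open scoped Matrix.Norms.Operator

namespace Matrix

section LinftyOp

variable {ι κ α : Type*} [Fintype ι] [Fintype κ] [SeminormedAddCommGroup α]

theorem sum_nnnorm_le_linfty_opNNNorm (A : Matrix ι κ α) (i : ι) :
    ∑ j, ‖A i j‖₊ ≤ ‖A‖₊ := by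
  rw [linfty_opNNNorm_def]
  exact Finset.le_sup (f := fun i => ∑ j, ‖A i j‖₊) (mem_univ i)

theorem linfty_opNNNorm_le_iff {A : Matrix ι κ α} {c : ℝ≥0} :
    ‖A‖₊ ≤ c ↔ ∀ i, ∑ j, ‖A i j‖₊ ≤ c := by
  simp [linfty_opNNNorm_def]

theorem linfty_opNNNorm_mono {β : Type*} [SeminormedAddCommGroup β] {A : Matrix ι κ α}
    {B : Matrix ι κ β} (h : ∀ i j, ‖A i j‖₊ ≤ ‖B i j‖₊) : ‖A‖₊ ≤ ‖B‖₊ :=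
  linfty_opNNNorm_le_iff.2 fun i =>
    (sum_le_sum fun j _ => h i j).trans (sum_nnnorm_le_linfty_opNNNorm B i)

theorem linfty_opNNNorm_le_of_nonneg_of_le {A B : Matrix ι κ ℝ} (hA : ∀ i j, 0 ≤ A i j)
    (hAB : ∀ i j, A i j ≤ B i j) : ‖A‖₊ ≤ ‖B‖₊ :=
  linfty_opNNNorm_mono fun i j => by
    simpa only [← NNReal.coe_le_coe, coe_nnnorm, Real.norm_eq_abs] using
      abs_le_abs_of_nonneg (hA i j) (hAB i j)

theorem linfty_opNNNorm_map_algebraMap (A : Matrix ι κ ℝ) :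
    ‖A.map (algebraMap ℝ ℂ)‖₊ = ‖A‖₊ := by
  simp [linfty_opNNNorm_def]

end LinftyOp

variable {ι κ τ : Type*} [Fintype τ]

theorem pow_apply_le_pow_apply [Fintype ι] [DecidableEq ι] {A B : Matrix ι ι ℝ}
    (hA : ∀ i j, 0 ≤ A i j) (hAB : ∀ i j, A i j ≤ B i j) (k : ℕ) (i j : ι) :
    (A ^ k) i j ≤ (B ^ k) i j := by
  induction k generalizing j with
  | zero => rfl
  | succ k ih =>
    rw [pow_succ, pow_succ, mul_apply, mul_apply]
    exact sum_le_sum fun l _ => mul_le_mul (ih l) (hAB l j) (hA l j)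
      (pow_apply_nonneg (fun i j => (hA i j).trans (hAB i j)) k i l)

noncomputable def hadamardGeomMean (K : τ → Matrix ι κ ℝ) (α : τ → ℝ) : Matrix ι κ ℝ :=
  of fun i j => ∏ t, K t i j ^ α t

theorem hadamardGeomMean_apply_nonneg {K : τ → Matrix ι κ ℝ} (hK : ∀ t i j, 0 ≤ K t i j)
    (α : τ → ℝ) (i : ι) (j : κ) : 0 ≤ hadamardGeomMean K α i j :=
  prod_nonneg fun t _ => Real.rpow_nonneg (hK t i j) _

theorem hadamardGeomMean_pow_apply_le [Fintype ι] [DecidableEq ι] {K : τ → Matrix ι ι ℝ}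
    (hK : ∀ t i j, 0 ≤ K t i j) {α : τ → ℝ} (hα : ∀ t, 0 < α t) (hsum : ∑ t, α t = 1)
    (k : ℕ) (i j : ι) :
    (hadamardGeomMean K α ^ k) i j ≤ hadamardGeomMean (fun t => K t ^ k) α i j := by
  induction k generalizing j with
  | zero =>
    by_cases hij : i = j
    · simp [hadamardGeomMean, hij]
    · simpa [one_apply_ne hij] using
        hadamardGeomMean_apply_nonneg (fun t => pow_apply_nonneg (hK t) 0) α i j
  | succ k ih =>
    have hKk := fun t => pow_apply_nonneg (hK t) k
    calc (hadamardGeomMean K α ^ (k + 1)) i j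
        = ∑ l, (hadamardGeomMean K α ^ k) i l * ∏ t, K t l j ^ α t := by
          rw [pow_succ, mul_apply]; rfl
      _ ≤ ∑ l, ∏ t, ((K t ^ k) i l * K t l j) ^ α t := by
          refine sum_le_sum fun l _ => ?_
          simp_rw [Real.mul_rpow (hKk _ i l) (hK _ l j), prod_mul_distrib]
          exact mul_le_mul_of_nonneg_right (ih l)
            (hadamardGeomMean_apply_nonneg hK α l j)
      _ ≤ ∏ t, (∑ l, (K t ^ k) i l * K t l j) ^ α t :=
          sum_prod_rpow_le_prod_sum_rpow _ _ (fun t l => mul_nonneg (hKk t i l) (hK t l j))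
            hα hsum
      _ = hadamardGeomMean (fun t => K t ^ (k + 1)) α i j := by
          simp only [hadamardGeomMean, of_apply, pow_succ _ k, mul_apply]

theorem linfty_opNNNorm_hadamardGeomMean_le [Fintype ι] [Fintype κ] {K : τ → Matrix ι κ ℝ}
    (hK : ∀ t i j, 0 ≤ K t i j) {α : τ → ℝ} (hα : ∀ t, 0 < α t) (hsum : ∑ t, α t = 1) :
    ‖hadamardGeomMean K α‖₊ ≤ ∏ t, ‖K t‖₊ ^ α t := by
  refine linfty_opNNNorm_le_iff.2 fun i => ?_
  rw [← NNReal.coe_le_coe]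
  push_cast
  have hrow : ∀ t, ∑ j, K t i j ≤ ‖K t‖ := fun t => by
    simpa [Real.norm_of_nonneg (hK t i _)] using
      NNReal.coe_le_coe.2 (sum_nnnorm_le_linfty_opNNNorm (K t) i)
  calc ∑ j, ‖hadamardGeomMean K α i j‖
      = ∑ j, ∏ t, K t i j ^ α t := by
        simp_rw [Real.norm_of_nonneg (hadamardGeomMean_apply_nonneg hK α i _)]; rfl
    _ ≤ ∏ t, (∑ j, K t i j) ^ α t :=
        sum_prod_rpow_le_prod_sum_rpow _ (fun t j => K t i j) (fun t j => hK t i j) hα hsum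
    _ ≤ ∏ t, ‖K t‖ ^ α t :=
        prod_le_prod (fun t _ => Real.rpow_nonneg (sum_nonneg fun j _ => hK t i j) _)
          fun t _ => Real.rpow_le_rpow (sum_nonneg fun j _ => hK t i j) (hrow t) (hα t).le

end Matrix

open Matrix

variable {n : ℕ}

theorem pow_nnnorm_pow_one_div_tendsto_nhds_specRad (A : Matrix (Fin n) (Fin n) ℝ) :
    Tendsto (fun k : ℕ => (‖A ^ k‖₊ : ℝ≥0∞) ^ (1 / k : ℝ)) atTop (𝓝 (specRad A)) := by
  refine (spectrum.pow_nnnorm_pow_one_div_tendsto_nhds_spectralRadius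
    (A.map (algebraMap ℝ ℂ))).congr fun k => ?_
  rw [← Matrix.map_pow, Matrix.linfty_opNNNorm_map_algebraMap]

theorem specRad_ne_top (A : Matrix (Fin n) (Fin n) ℝ) : specRad A ≠ ∞ :=
  spectralRadius_ne_top _

theorem specRad_pow (A : Matrix (Fin n) (Fin n) ℝ) {p : ℕ} (hp : p ≠ 0) :
    specRad (A ^ p) = specRad A ^ p := by
  rw [specRad, Matrix.map_pow]
  exact spectralRadius_pow _ hp

theorem specRad_mono {A B : Matrix (Fin n) (Fin n) ℝ} (hA : ∀ i j, 0 ≤ A i j)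
    (hAB : ∀ i j, A i j ≤ B i j) : specRad A ≤ specRad B :=
  le_of_tendsto_of_tendsto' (pow_nnnorm_pow_one_div_tendsto_nhds_specRad A)
    (pow_nnnorm_pow_one_div_tendsto_nhds_specRad B) fun k =>
    ENNReal.rpow_le_rpow (ENNReal.coe_le_coe.2 <| linfty_opNNNorm_le_of_nonneg_of_le
      (pow_apply_nonneg hA k) (pow_apply_le_pow_apply hA hAB k)) (by positivity)

theorem specRad_hadamardGeomMean_le {τ : Type*} [Fintype τ] {K : τ → Matrix (Fin n) (Fin n) ℝ}
    (hK : ∀ t i j, 0 ≤ K t i j) {α : τ → ℝ} (hα : ∀ t, 0 < α t) (hsum : ∑ t, α t = 1) :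
    specRad (hadamardGeomMean K α) ≤ ∏ t, specRad (K t) ^ α t := by
  have hlim : Tendsto (fun k : ℕ => ∏ t, ((‖K t ^ k‖₊ : ℝ≥0∞) ^ (1 / k : ℝ)) ^ α t) atTop
      (𝓝 (∏ t, specRad (K t) ^ α t)) :=
    ENNReal.tendsto_finsetProd_of_ne_top _
      (fun t _ => (pow_nnnorm_pow_one_div_tendsto_nhds_specRad (K t)).ennrpow_const _)
      fun t _ => ENNReal.rpow_ne_top_of_nonneg (hα t).le (specRad_ne_top _)
  refine le_of_tendsto_of_tendsto' (pow_nnnorm_pow_one_div_tendsto_nhds_specRad _) hlim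
    fun k => ?_
  have hKk := fun t => pow_apply_nonneg (hK t) k
  have hnorm : ‖hadamardGeomMean K α ^ k‖₊ ≤ ∏ t, ‖K t ^ k‖₊ ^ α t :=
    (linfty_opNNNorm_le_of_nonneg_of_le
      (pow_apply_nonneg (hadamardGeomMean_apply_nonneg hK α) k)
      (hadamardGeomMean_pow_apply_le hK hα hsum k)).trans
      (linfty_opNNNorm_hadamardGeomMean_le hKk hα hsum)
  calc (‖hadamardGeomMean K α ^ k‖₊ : ℝ≥0∞) ^ (1 / k : ℝ)
      ≤ ((∏ t, ‖K t ^ k‖₊ ^ α t : ℝ≥0) : ℝ≥0∞) ^ (1 / k : ℝ) :=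
        ENNReal.rpow_le_rpow (ENNReal.coe_le_coe.2 hnorm) (by positivity)
    _ = ∏ t, ((‖K t ^ k‖₊ : ℝ≥0∞) ^ (1 / k : ℝ)) ^ α t := by
        rw [ENNReal.ofNNReal_finsetProd, ← ENNReal.prod_rpow_of_nonneg (by positivity)]
        refine prod_congr rfl fun t _ => ?_
        rw [ENNReal.coe_rpow_of_nonneg _ (hα t).le, ← ENNReal.rpow_mul, ← ENNReal.rpow_mul,
          mul_comm]

theorem stmt15 {n m : ℕ} (K : Fin m → Matrix (Fin n) (Fin n) ℝ)
    (hK : ∀ t i j, 0 ≤ K t i j) (α : Fin m → ℝ) (hα : ∀ t, 0 < α t)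
    (hsum : ∑ t, α t = 1) (p : ℕ) (hp : 1 ≤ p) :
    specRad (Matrix.of fun i j => ∏ t, (K t i j) ^ (α t)) ≤
        (specRad (Matrix.of fun i j => ∏ t, ((K t ^ p) i j) ^ (α t))) ^ ((1:ℝ)/(p:ℝ)) ∧
      (specRad (Matrix.of fun i j => ∏ t, ((K t ^ p) i j) ^ (α t))) ^ ((1:ℝ)/(p:ℝ)) ≤
        ∏ t, (specRad (K t)) ^ (α t) := by
  have hp₀ : p ≠ 0 := by omega
  have hpR : (0 : ℝ) < p := by positivity
  rw [one_div, ENNReal.le_rpow_inv_iff hpR, ENNReal.rpow_inv_le_iff hpR, ENNReal.rpow_natCast,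
    ENNReal.rpow_natCast, ← specRad_pow _ hp₀, ← prod_pow]
  constructor
  · exact specRad_mono (pow_apply_nonneg (hadamardGeomMean_apply_nonneg hK α) p)
      (hadamardGeomMean_pow_apply_le hK hα hsum p)
  · calc specRad (hadamardGeomMean (fun t => K t ^ p) α)
        ≤ ∏ t, specRad (K t ^ p) ^ α t :=
          specRad_hadamardGeomMean_le (fun t => pow_apply_nonneg (hK t) p) hα hsum
      _ = ∏ t, (specRad (K t) ^ α t) ^ p := prod_congr rfl fun t _ => by
          rw [specRad_pow _ hp₀, ← ENNReal.rpow_natCast, ← ENNReal.rpow_natCast,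
            ← ENNReal.rpow_mul, ← ENNReal.rpow_mul, mul_comm]
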